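/- arXiv:2311.16643 — 2 statements merged into one kernel-verified Lean document; each statement's English description precedes it below -/
import Mathlib

section
/- Let L be a finite lattice, let T be a trinket-removal set of L, and let R be the induced lattice on L \ T. Then R has a knot if and only if L has a knot; that is, R is vertically decomposable if and only if L is vertically decomposable. -/
/-- An element of a finite lattice is *doubly irreducible* if it has exactly one
upper cover and exactly one lower cover. -/
def DoublyIrreducible {α : Type*} [Lattice α] (x : α) : Prop :=
  (∃! u, x ⋖ u) ∧ (∃! l, l ⋖ x)

/-- A *decoration site* of a lattice is a pair `(a, b)` such that the set of upper
covers of `a` equals the set of lower covers of `b`, and `a` has at least two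
upper covers. -/
def DecorationSite {α : Type*} [Lattice α] (a b : α) : Prop :=
  {x | a ⋖ x} = {x | x ⋖ b} ∧ 2 ≤ {x | a ⋖ x}.ncard

/-- The doubly irreducible elements strictly between `a` and `b`. -/
def siteTrinkets {α : Type*} [Lattice α] (a b : α) : Set α :=
  {x | DoublyIrreducible x ∧ a < x ∧ x < b}

/-- A *trinket-removal set* of a lattice: for every decoration site `(a, b)` it
contains exactly `min d (k - 2)` doubly irreducible elements strictly between
`a` and `b` (where `d` is the number of doubly irreducible elements strictly
between `a` and `b`, and `k` is the number of upper covers of `a`), and it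
contains no other elements. -/
def TrinketRemovalSet {α : Type*} [Lattice α] (T : Set α) : Prop :=
  (∀ a b : α, DecorationSite a b →
      (T ∩ siteTrinkets a b).ncard =
        min (siteTrinkets a b).ncard ({x | a ⋖ x}.ncard - 2)) ∧
  ∀ t ∈ T, ∃ a b : α, DecorationSite a b ∧ t ∈ siteTrinkets a b

/-- A finite lattice is a *rack* if `min d (k - 2) = 0` for every decoration site. -/
def IsRack (α : Type*) [Lattice α] : Prop :=
  ∀ a b : α, DecorationSite a b →
    min (siteTrinkets a b).ncard ({x | a ⋖ x}.ncard - 2) = 0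

/-- A *knot* of a finite lattice is an element distinct from top and bottom that
is comparable with every element. -/
def IsKnot {α : Type*} [Lattice α] (x : α) : Prop :=
  (∃ y, x < y) ∧ (∃ y, y < x) ∧ ∀ y, x ≤ y ∨ y ≤ x

/-- Birkhoff's semimodularity condition: whenever distinct `x` and `y` both
cover a common element `a`, the join `x ⊔ y` covers both `x` and `y`. -/
def Semimodular (α : Type*) [Lattice α] : Prop :=
  ∀ a x y : α, x ≠ y → a ⋖ x → a ⋖ y → x ⋖ x ⊔ y ∧ y ⋖ x ⊔ y

/-- The modular law: for all `x ≤ z`, `x ⊔ (y ⊓ z) = (x ⊔ y) ⊓ z`. -/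
def ModularLaw (α : Type*) [Lattice α] : Prop :=
  ∀ x y z : α, x ≤ z → x ⊔ (y ⊓ z) = (x ⊔ y) ⊓ z

/-!
Every removed element `t` is a doubly irreducible element strictly inside a decoration site
`(a, b)`, and then `a ⋖ t ⋖ b`; the corners `a` and `b` have two upper, resp. lower, covers, so
they are never removed. The elements strictly between `a` and `b` are pairwise incomparable upper
covers of `a`, and since at most `k - 2` of them are removed, at least two survive. Hence a knot
of `L` is never removed and stays a knot of `R` (removed elements are bounded by surviving
corners), while a knot `x` of `R` is comparable with both corners of the site of any removed `t`
and cannot lie strictly between them, as it would be incomparable with a surviving atom; so `x`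
is comparable with `t`.
-/

section Knots

variable {α : Type*} [Lattice α]

theorem IsKnot.eq_of_covBy {a x u : α} (hx : IsKnot x) (hax : a ⋖ x) (hau : a ⋖ u) : u = x := by
  rcases hx.2.2 u with hxu | hux
  · exact (hxu.eq_or_lt.resolve_right (hau.2 hax.lt)).symm
  · exact hux.eq_or_lt.resolve_right (hax.2 hau.lt)

variable {S : Sublattice α}

theorem IsKnot.coe_of_comparable {x : S} (hx : IsKnot x)
    (hcomp : ∀ y : α, (x : α) ≤ y ∨ y ≤ x) : IsKnot (x : α) := by
  obtain ⟨⟨y, hxy⟩, ⟨z, hzx⟩, -⟩ := hx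
  exact ⟨⟨y, hxy⟩, ⟨z, hzx⟩, hcomp⟩

theorem IsKnot.of_coe {x : S} (hx : IsKnot (x : α)) (hup : ∀ y, ∃ z ∈ S, y ≤ z)
    (hdown : ∀ y, ∃ z ∈ S, z ≤ y) : IsKnot x := by
  obtain ⟨⟨y, hxy⟩, ⟨y', hyx⟩, hcomp⟩ := hx
  obtain ⟨z, hzS, hyz⟩ := hup y
  obtain ⟨z', hzS', hzy⟩ := hdown y'
  exact ⟨⟨⟨z, hzS⟩, hxy.trans_le hyz⟩, ⟨⟨z', hzS'⟩, hzy.trans_lt hyx⟩, fun y => hcomp y⟩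

end Knots

section DecorationSite

variable {α : Type*} [Lattice α] {a b : α}

theorem DecorationSite.covBy_iff (h : DecorationSite a b) {u : α} : a ⋖ u ↔ u ⋖ b :=
  Set.ext_iff.1 h.1 u

theorem DecorationSite.covBy_of_lt [Finite α] (h : DecorationSite a b) {z : α} (haz : a < z)
    (hzb : z < b) : a ⋖ z ∧ z ⋖ b := by
  obtain ⟨u, hau, huz⟩ := exists_covBy_le_of_lt haz
  have hub : u ⋖ b := h.covBy_iff.1 hau
  obtain rfl : u = z := huz.eq_or_lt.resolve_right fun huz => hub.2 huz hzb
  exact ⟨hau, hub⟩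

theorem DecorationSite.not_doublyIrreducible_left (h : DecorationSite a b) :
    ¬ DoublyIrreducible a := by
  obtain ⟨u, hu, v, hv, huv⟩ :=
    (Set.one_lt_ncard (Set.finite_of_ncard_pos (zero_lt_two.trans_le h.2))).1 h.2
  exact fun ha => huv (ha.1.unique hu hv)

theorem DecorationSite.not_doublyIrreducible_right (h : DecorationSite a b) :
    ¬ DoublyIrreducible b := by
  have h2 : 2 ≤ {x | x ⋖ b}.ncard := h.1 ▸ h.2
  obtain ⟨u, hu, v, hv, huv⟩ :=
    (Set.one_lt_ncard (Set.finite_of_ncard_pos (zero_lt_two.trans_le h2))).1 h2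
  exact fun hb => huv (hb.2.unique hu hv)

end DecorationSite

namespace TrinketRemovalSet

variable {α : Type*} [Lattice α] [Finite α] {T : Set α}

theorem exists_decorationSite (hT : TrinketRemovalSet T) {t : α} (ht : t ∈ T) :
    ∃ a b, DecorationSite a b ∧ a ⋖ t ∧ t ⋖ b ∧ a ∉ T ∧ b ∉ T := by
  obtain ⟨a, b, hab, -, hat, htb⟩ := hT.2 t ht
  have hDI {s : α} (hs : s ∈ T) : DoublyIrreducible s := by
    obtain ⟨-, -, -, hs, -⟩ := hT.2 s hs
    exact hs
  obtain ⟨hat, htb⟩ := hab.covBy_of_lt hat htb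
  exact ⟨a, b, hab, hat, htb,
    fun ha => hab.not_doublyIrreducible_left (hDI ha),
    fun hb => hab.not_doublyIrreducible_right (hDI hb)⟩

theorem exists_covBy_notMem_ne (hT : TrinketRemovalSet T) {a b : α} (hab : DecorationSite a b)
    (x : α) : ∃ u, a ⋖ u ∧ u ∉ T ∧ u ≠ x := by
  set U : Set α := {z | a ⋖ z}
  have hremoved : U ∩ T ⊆ T ∩ siteTrinkets a b := by
    rintro z ⟨haz, hzT⟩
    obtain ⟨-, -, -, hz, -⟩ := hT.2 z hzT
    exact ⟨hzT, hz, haz.lt, (hab.covBy_iff.1 haz).lt⟩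
  have hcard : (U ∩ T).ncard ≤ U.ncard - 2 :=
    calc (U ∩ T).ncard ≤ (T ∩ siteTrinkets a b).ncard := Set.ncard_le_ncard hremoved
      _ = min (siteTrinkets a b).ncard (U.ncard - 2) := hT.1 a b hab
      _ ≤ U.ncard - 2 := min_le_right _ _
  have hsurvive : 1 < (U \ T).ncard := by
    have := Set.ncard_inter_add_ncard_sdiff_eq_ncard U T
    have : 2 ≤ U.ncard := hab.2
    omega
  obtain ⟨u, ⟨hau, huT⟩, hux⟩ := Set.exists_ne_of_one_lt_ncard hsurvive x
  exact ⟨u, hau, huT, hux⟩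

theorem exists_ge_notMem (hT : TrinketRemovalSet T) (y : α) : ∃ z, z ∉ T ∧ y ≤ z := by
  by_cases hyT : y ∈ T
  · obtain ⟨-, b, -, -, hyb, -, hbT⟩ := hT.exists_decorationSite hyT
    exact ⟨b, hbT, hyb.le⟩
  · exact ⟨y, hyT, le_rfl⟩

theorem exists_le_notMem (hT : TrinketRemovalSet T) (y : α) : ∃ z, z ∉ T ∧ z ≤ y := by
  by_cases hyT : y ∈ T
  · obtain ⟨a, -, -, hay, -, haT, -⟩ := hT.exists_decorationSite hyT
    exact ⟨a, haT, hay.le⟩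
  · exact ⟨y, hyT, le_rfl⟩

theorem notMem_of_isKnot (hT : TrinketRemovalSet T) {x : α} (hx : IsKnot x) : x ∉ T := by
  intro hxT
  obtain ⟨a, b, hab, hax, -⟩ := hT.exists_decorationSite hxT
  obtain ⟨u, hau, -, hux⟩ := hT.exists_covBy_notMem_ne hab x
  exact hux (hx.eq_of_covBy hax hau)

variable {S : Sublattice α}

theorem comparable_of_isKnot_coe (hT : TrinketRemovalSet T) (hS : (S : Set α) = Tᶜ) {x : S}
    (hx : IsKnot x) (y : α) : (x : α) ≤ y ∨ y ≤ x := by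
  have hmem {z : α} (hz : z ∉ T) : z ∈ S := by rwa [← SetLike.mem_coe, hS]
  by_cases hyT : y ∈ T
  swap
  · exact hx.2.2 ⟨y, hmem hyT⟩
  obtain ⟨a, b, hab, hay, hyb, haT, hbT⟩ := hT.exists_decorationSite hyT
  have hnot_between : ¬ (a < x ∧ (x : α) < b) := by
    rintro ⟨hax, hxb⟩
    obtain ⟨u, hau, huT, hux⟩ := hT.exists_covBy_notMem_ne hab x
    have hcov {v : S} (hv : a ⋖ (v : α)) : (⟨a, hmem haT⟩ : S) ⋖ v :=
      CovBy.of_image (OrderEmbedding.subtype _) hv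
    exact hux (congrArg Subtype.val
      (hx.eq_of_covBy (hcov (hab.covBy_of_lt hax hxb).1) (hcov (v := ⟨u, hmem huT⟩) hau)))
  rcases hx.2.2 ⟨a, hmem haT⟩ with hxa | hax
  · exact Or.inl ((Subtype.coe_le_coe.2 hxa).trans hay.le)
  rcases hx.2.2 ⟨b, hmem hbT⟩ with hxb | hbx
  swap
  · exact Or.inr (hyb.le.trans (Subtype.coe_le_coe.2 hbx))
  rcases (Subtype.coe_le_coe.2 hax).eq_or_lt with rfl | hax
  · exact Or.inl hay.le
  rcases (Subtype.coe_le_coe.2 hxb).eq_or_lt with rfl | hxb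
  · exact Or.inr hyb.le
  exact absurd ⟨hax, hxb⟩ hnot_between

end TrinketRemovalSet

theorem stmt_10_general {α : Type*} [Lattice α] [Finite α] (T : Set α)
    (hT : TrinketRemovalSet T) (S : Sublattice α) (hS : (S : Set α) = Tᶜ) :
    (∃ x : ↥S, IsKnot x) ↔ (∃ x : α, IsKnot x) := by
  have hmem {z : α} : z ∈ S ↔ z ∉ T := by rw [← SetLike.mem_coe, hS]; rfl
  constructor
  · rintro ⟨x, hx⟩
    exact ⟨x, hx.coe_of_comparable (hT.comparable_of_isKnot_coe hS hx)⟩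
  · rintro ⟨x, hx⟩
    refine ⟨⟨x, hmem.2 (hT.notMem_of_isKnot hx)⟩, hx.of_coe (fun y => ?_) (fun y => ?_)⟩
    · obtain ⟨z, hzT, hyz⟩ := hT.exists_ge_notMem y
      exact ⟨z, hmem.2 hzT, hyz⟩
    · obtain ⟨z, hzT, hzy⟩ := hT.exists_le_notMem y
      exact ⟨z, hmem.2 hzT, hzy⟩

/-- The lattice obtained by removing a trinket-removal set has a knot iff the
original lattice has a knot: it is vertically decomposable iff the original
lattice is. -/
theorem stmt_10 {α : Type*} [Lattice α] [Finite α] [Nonempty α] (T : Set α)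
    (hT : TrinketRemovalSet T) (S : Sublattice α) (hS : (S : Set α) = Tᶜ) :
    (∃ x : ↥S, IsKnot x) ↔ (∃ x : α, IsKnot x) :=
  stmt_10_general T hT S hS
end

section
/- Let L be a finite lattice, let T be a trinket-removal set of L, and let R be the induced lattice on L \ T. Then L is semimodular if and only if R is semimodular, where semimodularity is Birkhoff's condition: whenever distinct elements x and y both cover a common element a, the join x ⊔ y covers both x and y. -/
/-!
A removed trinket `t` sits in a decoration site `(a, b)` with `a ⋖ t ⋖ b`, and since `T` takes
at most `k - 2` of the `k` upper covers of `a`, some upper cover `c` of `a` survives; as `t` is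
doubly irreducible, anything with `x < t < y` satisfies `x ≤ a < c < b ≤ y`. Hence `R` has exactly
the covering pairs of `L` with both ends kept, and Birkhoff's condition transfers in both
directions: two covers of `a`, one of which is a trinket, join to the upper corner of its site,
which covers both; otherwise `a`, having two upper covers, is kept as well.
-/

lemma CovBy.left_lt_sup {α : Type*} [Lattice α] {a x y : α} (hax : a ⋖ x) (hay : a ⋖ y)
    (hxy : x ≠ y) : x < x ⊔ y :=
  _root_.left_lt_sup.2 fun hyx => hxy ((hax.eq_or_eq hay.le hyx).resolve_left hay.ne').symm

namespace DecorationSite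

variable {α : Type*} [Lattice α] {a b x y : α}

lemma covBy_iff_s12 (h : DecorationSite a b) : a ⋖ x ↔ x ⋖ b :=
  Set.ext_iff.1 h.1 x

lemma sup_eq (h : DecorationSite a b) (hxy : x ≠ y) (hax : a ⋖ x) (hay : a ⋖ y) :
    x ⊔ y = b :=
  ((h.covBy_iff_s12.1 hax).eq_or_eq le_sup_left (sup_le (h.covBy_iff_s12.1 hax).le
    (h.covBy_iff_s12.1 hay).le)).resolve_left (hax.left_lt_sup hay hxy).ne'

end DecorationSite

namespace DoublyIrreducible

variable {α : Type*} [Lattice α] [Finite α] {t a b x : α}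

lemma le_of_lt (ht : DoublyIrreducible t) (hat : a ⋖ t) (hxt : x < t) : x ≤ a := by
  obtain ⟨c, hxc, hct⟩ := exists_le_covBy_of_lt hxt
  exact ht.2.unique hct hat ▸ hxc

lemma le_of_gt (ht : DoublyIrreducible t) (htb : t ⋖ b) (htx : t < x) : b ≤ x := by
  obtain ⟨c, htc, hcx⟩ := exists_covBy_le_of_lt htx
  exact ht.1.unique htc htb ▸ hcx

end DoublyIrreducible

namespace TrinketRemovalSet

variable {α : Type*} [Lattice α] {T : Set α} {t a b x y : α}

lemma doublyIrreducible (hT : TrinketRemovalSet T) (ht : t ∈ T) : DoublyIrreducible t := by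
  obtain ⟨_, _, _, hdi, -⟩ := hT.2 t ht
  exact hdi

variable [Finite α]

lemma exists_site (hT : TrinketRemovalSet T) (ht : t ∈ T) :
    ∃ a b, DecorationSite a b ∧ a ⋖ t ∧ t ⋖ b := by
  obtain ⟨a, b, hab, -, hat, htb⟩ := hT.2 t ht
  obtain ⟨c, hac, hct⟩ := exists_covBy_le_of_lt hat
  obtain rfl : c = t := hct.lt_or_eq.resolve_left fun hct' => (hab.covBy_iff_s12.1 hac).2 hct' htb
  exact ⟨a, b, hab, hac, hab.covBy_iff_s12.1 hac⟩

lemma decorationSite_of_covBy (hT : TrinketRemovalSet T) (ht : t ∈ T) (hat : a ⋖ t) :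
    ∃ b, DecorationSite a b := by
  obtain ⟨a', b, hab, ha't, -⟩ := hT.exists_site ht
  exact ⟨b, (hT.doublyIrreducible ht).2.unique hat ha't ▸ hab⟩

lemma exists_covBy_notMem (hT : TrinketRemovalSet T) (hab : DecorationSite a b) :
    ∃ c, a ⋖ c ∧ c ∉ T := by
  by_contra! h
  have hcovers : {x | a ⋖ x} ⊆ T ∩ siteTrinkets a b := fun c hc =>
    ⟨h c hc, hT.doublyIrreducible (h c hc), hc.lt, (hab.covBy_iff_s12.1 hc).lt⟩
  have hle := Set.ncard_le_ncard hcovers (Set.toFinite _)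
  rw [hT.1 a b hab] at hle
  have := min_le_right (siteTrinkets a b).ncard ({x | a ⋖ x}.ncard - 2)
  have := hab.2
  omega

lemma exists_notMem_between (hT : TrinketRemovalSet T) (ht : t ∈ T) (hxt : x < t)
    (hty : t < y) : ∃ c ∉ T, x < c ∧ c < y := by
  obtain ⟨a, b, hab, hat, htb⟩ := hT.exists_site ht
  obtain ⟨c, hac, hcT⟩ := hT.exists_covBy_notMem hab
  have hdi := hT.doublyIrreducible ht
  exact ⟨c, hcT, (hdi.le_of_lt hat hxt).trans_lt hac.lt,
    (hab.covBy_iff_s12.1 hac).lt.trans_le (hdi.le_of_gt htb hty)⟩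

lemma covBy_coe_iff (hT : TrinketRemovalSet T) {S : Set α} (hS : Tᶜ ⊆ S) {x y : S} :
    (x : α) ⋖ y ↔ x ⋖ y := by
  refine ⟨fun h => ⟨h.1, fun z hxz hzy => h.2 hxz hzy⟩, fun h => ⟨h.1, fun z hxz hzy => ?_⟩⟩
  by_cases hzT : z ∈ T
  · obtain ⟨c, hcT, hxc, hcy⟩ := hT.exists_notMem_between hzT hxz hzy
    exact h.2 (c := ⟨c, hS hcT⟩) hxc hcy
  · exact h.2 (c := ⟨z, hS hzT⟩) hxz hzy

end TrinketRemovalSet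

theorem stmt_12_general {α : Type*} [Lattice α] [Finite α] (T : Set α)
    (hT : TrinketRemovalSet T) (S : Sublattice α) (hS : (S : Set α) = Tᶜ) :
    Semimodular α ↔ Semimodular ↥S := by
  have hcov {x y : S} := hT.covBy_coe_iff hS.ge (x := x) (y := y)
  refine ⟨fun hL a x y hxy hax hay => ?_, fun hR a x y hxy hax hay => ?_⟩
  · obtain ⟨hx, hy⟩ := hL a x y (Subtype.coe_ne_coe.2 hxy) (hcov.2 hax) (hcov.2 hay)
    exact ⟨hcov.1 hx, hcov.1 hy⟩
  by_cases hxyT : x ∈ T ∨ y ∈ T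
  · obtain ⟨b, hab⟩ := hxyT.elim (hT.decorationSite_of_covBy · hax)
      (hT.decorationSite_of_covBy · hay)
    rw [hab.sup_eq hxy hax hay]
    exact ⟨hab.covBy_iff_s12.1 hax, hab.covBy_iff_s12.1 hay⟩
  obtain ⟨hxT, hyT⟩ := not_or.1 hxyT
  have haT : a ∉ T := fun ha => hxy ((hT.doublyIrreducible ha).1.unique hax hay)
  obtain ⟨hx, hy⟩ := hR ⟨a, hS.ge haT⟩ ⟨x, hS.ge hxT⟩ ⟨y, hS.ge hyT⟩
    (Subtype.coe_ne_coe.1 hxy) (hcov.1 hax) (hcov.1 hay)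
  exact ⟨hcov.2 hx, hcov.2 hy⟩

/-- A finite lattice is semimodular (in the sense of Birkhoff's condition) iff
the lattice obtained by removing a trinket-removal set is semimodular. -/
theorem stmt_12 {α : Type*} [Lattice α] [Finite α] [Nonempty α] (T : Set α)
    (hT : TrinketRemovalSet T) (S : Sublattice α) (hS : (S : Set α) = Tᶜ) :
    Semimodular α ↔ Semimodular ↥S :=
  stmt_12_general T hT S hS
end
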